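/- Let (y_n) be the sequence generated by the LCR algorithm. If (y_n) is bounded, then every accumulation point of (y_n) (every limit of a convergent subsequence) lies in Z = {y : V̇(y) = 0}. -/

import Mathlib

/-! The decrease condition makes `V ∘ y` antitone and bounded below, so its increments, and
with them `η n · V̇(y n)`, tend to `0`. If `V̇(y*) < 0` at an accumulation point `y*`, the
steps `η` must therefore vanish along the subsequence, so eventually the backtracking search
rejected the larger step `f1 · η`. By the mean value theorem this rejection says that some
directional derivative `⟪∇V(z), F(y)⟫` at a point `z` between `y` and `y + f1 η F(y)` exceeds
`λ V̇(y)`; in the limit `V̇(y*) ≥ λ V̇(y*)`, which contradicts `λ < 1`. -/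

open Filter

/-- The Lyapunov derivative `V̇(y) = ⟪∇V(y), F(y)⟫`. -/
noncomputable def lyapDeriv {m : ℕ}
    (F : EuclideanSpace ℝ (Fin m) → EuclideanSpace ℝ (Fin m))
    (V : EuclideanSpace ℝ (Fin m) → ℝ) (y : EuclideanSpace ℝ (Fin m)) : ℝ :=
  inner ℝ (gradient V y) (F y)

/-- `f(y,η) = V(y + η F(y)) − V(y) − λ η V̇(y)`. -/
noncomputable def armijoGap {m : ℕ}
    (F : EuclideanSpace ℝ (Fin m) → EuclideanSpace ℝ (Fin m))
    (V : EuclideanSpace ℝ (Fin m) → ℝ) (lam : ℝ)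
    (y : EuclideanSpace ℝ (Fin m)) (η : ℝ) : ℝ :=
  V (y + η • F y) - V y - lam * η * lyapDeriv F V y

/-- The LCR algorithm: `y_{n+1} = y_n + η_n F(y_n)` with `η_n = η_init · f1^{-p_n}`, where
`p_n` is the least `k ∈ ℕ` such that `f(y_n, η_init · f1^{-k}) ≤ 0`. -/
def IsLCR {m : ℕ}
    (F : EuclideanSpace ℝ (Fin m) → EuclideanSpace ℝ (Fin m))
    (V : EuclideanSpace ℝ (Fin m) → ℝ) (lam ηinit f1 : ℝ)
    (y : ℕ → EuclideanSpace ℝ (Fin m)) (η : ℕ → ℝ) : Prop :=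
  ∀ n, y (n + 1) = y n + η n • F (y n) ∧
    ∃ p : ℕ, η n = ηinit / f1 ^ p ∧
      armijoGap F V lam (y n) (η n) ≤ 0 ∧
      ∀ k < p, ¬ armijoGap F V lam (y n) (ηinit / f1 ^ k) ≤ 0

open Topology

section Gradient

variable {E : Type*} [NormedAddCommGroup E] [InnerProductSpace ℝ E] [CompleteSpace E]
  {V : E → ℝ}

theorem ContDiff.continuous_gradient (hV : ContDiff ℝ 1 V) : Continuous (gradient V) :=
  (InnerProductSpace.toDual ℝ E).symm.continuous.comp (hV.continuous_fderiv one_ne_zero)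

theorem exists_inner_gradient_eq_slope (hV : Differentiable ℝ V) (x w : E) {s : ℝ}
    (hs : 0 < s) :
    ∃ c ∈ Set.Ioo 0 s, inner ℝ (gradient V (x + c • w)) w = (V (x + s • w) - V x) / s := by
  have hline : ∀ t : ℝ, HasDerivAt (fun t : ℝ => x + t • w) w t := fun t => by
    simpa using ((hasDerivAt_id t).smul_const w).const_add x
  have hderiv : ∀ t : ℝ, HasDerivAt (fun t : ℝ => V (x + t • w))
      (inner ℝ (gradient V (x + t • w)) w) t := fun t => by
    rw [inner_gradient_left]
    exact (hV _).hasFDerivAt.comp_hasDerivAt t (hline t)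
  obtain ⟨c, hc, hslope⟩ := exists_hasDerivAt_eq_slope _ _ hs
    (fun t _ => (hderiv t).continuousAt.continuousWithinAt) (fun t _ => hderiv t)
  exact ⟨c, hc, by simpa using hslope⟩

end Gradient

theorem tendsto_zero_of_sub_le_mul_of_nonpos {a b : ℕ → ℝ} {c : ℝ} (hc : 0 < c)
    (ha : BddBelow (Set.range a)) (hab : ∀ n, a (n + 1) - a n ≤ c * b n)
    (hb : ∀ n, b n ≤ 0) : Tendsto b atTop (𝓝 0) := by
  have hanti : Antitone a := antitone_nat_of_succ_le fun n => by
    nlinarith [hab n, hb n]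
  have hincr : Tendsto (fun n => (a (n + 1) - a n) / c) atTop (𝓝 0) := by
    have hlim := tendsto_atTop_ciInf hanti ha
    simpa using ((hlim.comp (tendsto_add_atTop_nat 1)).sub hlim).div_const c
  refine tendsto_of_tendsto_of_tendsto_of_le_of_le hincr tendsto_const_nhds (fun n => ?_) hb
  rw [div_le_iff₀ hc, mul_comm]
  exact hab n

theorem tendsto_zero_of_tendsto_mul_zero {ι : Type*} {l : Filter ι} {f g : ι → ℝ} {L : ℝ}
    (hfg : Tendsto (fun i => f i * g i) l (𝓝 0)) (hg : Tendsto g l (𝓝 L)) (hL : L ≠ 0) :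
    Tendsto f l (𝓝 0) := by
  have hquot := hfg.div hg hL
  rw [zero_div] at hquot
  refine hquot.congr' ?_
  filter_upwards [hg.eventually_ne hL] with i hi
  exact mul_div_cancel_right₀ (f i) hi

section Lyapunov

variable {m : ℕ} {F : EuclideanSpace ℝ (Fin m) → EuclideanSpace ℝ (Fin m)}
  {V : EuclideanSpace ℝ (Fin m) → ℝ} {lam : ℝ}

theorem continuous_lyapDeriv (hF : Continuous F) (hV : ContDiff ℝ 1 V) :
    Continuous (lyapDeriv F V) :=
  hV.continuous_gradient.inner hF

theorem le_lyapDeriv_of_armijoGap_pos {ι : Type*} {l : Filter ι} [l.NeBot]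
    (hF : Continuous F) (hV : ContDiff ℝ 1 V) {x : ι → EuclideanSpace ℝ (Fin m)}
    {x₀ : EuclideanSpace ℝ (Fin m)} {s : ι → ℝ} (hx : Tendsto x l (𝓝 x₀))
    (hs : Tendsto s l (𝓝 0)) (hs_pos : ∀ i, 0 < s i)
    (hgap : ∀ᶠ i in l, 0 < armijoGap F V lam (x i) (s i)) :
    lam * lyapDeriv F V x₀ ≤ lyapDeriv F V x₀ := by
  choose c hc hslope using fun i =>
    exists_inner_gradient_eq_slope (hV.differentiable one_ne_zero) (x i) (F (x i)) (hs_pos i)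
  have hlt : ∀ᶠ i in l,
      lam * lyapDeriv F V (x i) ≤ inner ℝ (gradient V (x i + c i • F (x i))) (F (x i)) := by
    filter_upwards [hgap] with i hi
    rw [hslope, le_div_iff₀ (hs_pos i)]
    rw [armijoGap] at hi
    linarith
  have hc0 : Tendsto c l (𝓝 0) :=
    tendsto_of_tendsto_of_tendsto_of_le_of_le tendsto_const_nhds hs
      (fun i => (hc i).1.le) (fun i => (hc i).2.le)
  have hFx : Tendsto (fun i => F (x i)) l (𝓝 (F x₀)) := (hF.tendsto x₀).comp hx
  have hz : Tendsto (fun i => x i + c i • F (x i)) l (𝓝 x₀) := by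
    simpa using hx.add (hc0.smul hFx)
  have hinner : Tendsto (fun i => inner ℝ (gradient V (x i + c i • F (x i))) (F (x i))) l
      (𝓝 (lyapDeriv F V x₀)) :=
    ((hV.continuous_gradient.tendsto x₀).comp hz).inner hFx
  have hlhs : Tendsto (fun i => lam * lyapDeriv F V (x i)) l (𝓝 (lam * lyapDeriv F V x₀)) :=
    (((continuous_lyapDeriv hF hV).tendsto x₀).comp hx).const_mul lam
  exact le_of_tendsto_of_tendsto hlhs hinner hlt

namespace IsLCR

variable {ηinit f1 : ℝ} {y : ℕ → EuclideanSpace ℝ (Fin m)} {η : ℕ → ℝ}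

theorem step_pos (halg : IsLCR F V lam ηinit f1 y η) (hηinit : 0 < ηinit) (hf1 : 0 < f1)
    (n : ℕ) : 0 < η n := by
  obtain ⟨p, hp, -⟩ := (halg n).2
  rw [hp]
  positivity

theorem sub_le (halg : IsLCR F V lam ηinit f1 y η) (n : ℕ) :
    V (y (n + 1)) - V (y n) ≤ lam * η n * lyapDeriv F V (y n) := by
  obtain ⟨hy, p, -, hgap, -⟩ := halg n
  rw [hy]
  rw [armijoGap] at hgap
  linarith

theorem tendsto_step_mul_lyapDeriv (halg : IsLCR F V lam ηinit f1 y η) (hlam : 0 < lam)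
    (hηinit : 0 < ηinit) (hf1 : 0 < f1) (hV0 : ∀ y, 0 ≤ V y)
    (hVdot : ∀ y, lyapDeriv F V y ≤ 0) :
    Tendsto (fun n => η n * lyapDeriv F V (y n)) atTop (𝓝 0) :=
  tendsto_zero_of_sub_le_mul_of_nonpos hlam ⟨0, by rintro _ ⟨n, rfl⟩; exact hV0 (y n)⟩
    (fun n => by rw [← mul_assoc]; exact halg.sub_le n)
    (fun n => mul_nonpos_of_nonneg_of_nonpos (halg.step_pos hηinit hf1 n).le (hVdot _))

theorem armijoGap_pos_of_lt (halg : IsLCR F V lam ηinit f1 y η) (hf1 : f1 ≠ 0) {n : ℕ}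
    (hn : η n < ηinit) : 0 < armijoGap F V lam (y n) (f1 * η n) := by
  obtain ⟨p, hp, -, hleast⟩ := (halg n).2
  obtain ⟨k, rfl⟩ : ∃ k, p = k + 1 := Nat.exists_eq_add_one.mpr <| Nat.pos_of_ne_zero <| by
    rintro rfl
    simp [hp] at hn
  have hprev : f1 * η n = ηinit / f1 ^ k := by
    rw [hp, pow_succ]
    field_simp
  rw [hprev]
  exact not_le.mp (hleast k k.lt_succ_self)

end IsLCR

end Lyapunov

theorem lcr_accumulation_points_in_Z_general
    {m : ℕ} (lam ηinit f1 : ℝ)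
    (hlam : lam ∈ Set.Ioo (0 : ℝ) 1) (hηinit : 0 < ηinit) (hf1 : 1 < f1)
    (F : EuclideanSpace ℝ (Fin m) → EuclideanSpace ℝ (Fin m))
    (V : EuclideanSpace ℝ (Fin m) → ℝ)
    (hF : Continuous F) (hV : ContDiff ℝ 2 V) (hV0 : ∀ y, 0 ≤ V y)
    (hVdot : ∀ y, lyapDeriv F V y ≤ 0)
    (y : ℕ → EuclideanSpace ℝ (Fin m)) (η : ℕ → ℝ)
    (halg : IsLCR F V lam ηinit f1 y η)
    (ystar : EuclideanSpace ℝ (Fin m))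
    (hacc : ∃ φ : ℕ → ℕ, StrictMono φ ∧ Tendsto (y ∘ φ) atTop (nhds ystar)) :
    lyapDeriv F V ystar = 0 := by
  obtain ⟨φ, hφ, hyφ⟩ := hacc
  have hf1_pos : 0 < f1 := zero_lt_one.trans hf1
  have hV1 : ContDiff ℝ 1 V := hV.of_le one_le_two
  refine le_antisymm (hVdot ystar) (not_lt.mp fun hneg => ?_)
  have hstep : Tendsto (η ∘ φ) atTop (𝓝 0) :=
    tendsto_zero_of_tendsto_mul_zero
      ((halg.tendsto_step_mul_lyapDeriv hlam.1 hηinit hf1_pos hV0 hVdot).comp hφ.tendsto_atTop)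
      (((continuous_lyapDeriv hF hV1).tendsto ystar).comp hyφ) hneg.ne
  have hgap : ∀ᶠ n in atTop, 0 < armijoGap F V lam (y (φ n)) (f1 * η (φ n)) :=
    (hstep.eventually_lt_const hηinit).mono fun n => halg.armijoGap_pos_of_lt hf1_pos.ne'
  have hlim := le_lyapDeriv_of_armijoGap_pos hF hV1 hyφ (by simpa using hstep.const_mul f1)
    (fun n => mul_pos hf1_pos (halg.step_pos hηinit hf1_pos _)) hgap
  nlinarith [hlam.2]

/-- **LCR limit set (discrete LaSalle principle).** If the sequence generated by LCR is
bounded, every accumulation point lies in `Z = {y | V̇(y) = 0}`. -/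
theorem lcr_accumulation_points_in_Z
    {m : ℕ} (lam ηinit f1 : ℝ)
    (hlam : lam ∈ Set.Ioo (0 : ℝ) 1) (hηinit : 0 < ηinit) (hf1 : 1 < f1)
    (F : EuclideanSpace ℝ (Fin m) → EuclideanSpace ℝ (Fin m))
    (V : EuclideanSpace ℝ (Fin m) → ℝ)
    (hF : Continuous F) (hV : ContDiff ℝ 2 V) (hV0 : ∀ y, 0 ≤ V y)
    (hVdot : ∀ y, lyapDeriv F V y ≤ 0)
    (y : ℕ → EuclideanSpace ℝ (Fin m)) (η : ℕ → ℝ)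
    (halg : IsLCR F V lam ηinit f1 y η)
    (hbdd : Bornology.IsBounded (Set.range y))
    (ystar : EuclideanSpace ℝ (Fin m))
    (hacc : ∃ φ : ℕ → ℕ, StrictMono φ ∧ Tendsto (y ∘ φ) atTop (nhds ystar)) :
    lyapDeriv F V ystar = 0 :=
  lcr_accumulation_points_in_Z_general lam ηinit f1 hlam hηinit hf1 F V hF hV hV0 hVdot y η halg
    ystar hacc
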